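/- arXiv:1203.5222 — 3 statements merged into one kernel-verified Lean document; each statement's English description precedes it below -/
import Mathlib

section
/- Let f, g : ℝ → ℂ be measurable functions such that x ↦ |x|^{−1/2}|f(x)| and x ↦ |x|^{−1/2}|g(x)| are integrable on ℝ. Define F₁(λ) = ∫_ℝ conj(f(x))·g(λx) dx for λ ∈ ℝ∖{0}, and the Mellin transforms M₀[h](τ) = ∫_{ℝ∖{0}} |x|^{−1/2+iτ} h(x) dx, M₁[h](τ) = ∫_{ℝ∖{0}} |x|^{−1/2+iτ}·sgn(x)·h(x) dx. Then for every τ ∈ ℝ, M₀[F₁](τ) = conj(M₀[f](τ))·M₀[g](τ) and M₁[F₁](τ) = conj(M₁[f](τ))·M₁[g](τ), where M_j[F₁](τ) is the corresponding Mellin integral of F₁ over λ ∈ ℝ∖{0} (all these integrals converging absolutely, by Fubini's theorem). -/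
open MeasureTheory Complex

private lemma mellin_aux
    (f g : ℝ → ℂ) (hfm : Measurable f) (hgm : Measurable g)
    (hf' : Integrable (fun x : ℝ => |x| ^ (-(1 / 2 : ℝ)) * ‖f x‖))
    (hg' : Integrable (fun x : ℝ => |x| ^ (-(1 / 2 : ℝ)) * ‖g x‖))
    (w : ℝ → ℂ) (hwm : Measurable w) (_hw0 : w 0 = 0)
    (habs : ∀ x : ℝ, x ≠ 0 → ‖w x‖ = |x| ^ (-(1 / 2 : ℝ)))
    (hmul : ∀ l x : ℝ, l ≠ 0 → x ≠ 0 → w (l * x) = w l * w x) :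
    Integrable (fun l : ℝ => w l * ∫ x : ℝ, (starRingEnd ℂ) (f x) * g (l * x)) ∧
    (∫ l : ℝ, w l * ∫ x : ℝ, (starRingEnd ℂ) (f x) * g (l * x)) =
      (starRingEnd ℂ) (∫ x : ℝ, w x * f x) * ∫ x : ℝ, w x * g x := by
  have h0 : ∀ᵐ x : ℝ, x ≠ 0 := by
    refine ae_iff.mpr ?_
    have : {a : ℝ | ¬ a ≠ 0} = {0} := by ext a; simp
    rw [this]
    exact measure_singleton 0
  have hwne : ∀ c : ℝ, c ≠ 0 → w c ≠ 0 := by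
    intro c hc h
    have h1 := habs c hc
    rw [h, norm_zero] at h1
    exact absurd h1.symm (ne_of_gt (Real.rpow_pos_of_pos (abs_pos.2 hc) _))
  -- integrability of the weighted functions
  have hGint : Integrable (fun y : ℝ => w y * g y) := by
    refine hg'.mono' ((hwm.mul hgm).aestronglyMeasurable) ?_
    filter_upwards [h0] with y hy
    rw [norm_mul, habs y hy]
  have hconj : ∀ c : ℝ, c ≠ 0 →
      (starRingEnd ℂ) (w c) = (w c)⁻¹ * ((|c|⁻¹ : ℝ) : ℂ) := by
    intro c hc
    have h1 : w c * (starRingEnd ℂ) (w c) = ((|c|⁻¹ : ℝ) : ℂ) := by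
      rw [Complex.mul_conj]
      congr 1
      rw [← Complex.sq_norm, habs c hc, ← Real.rpow_natCast (|c| ^ (-(1/2 : ℝ))) 2,
        ← Real.rpow_mul (abs_nonneg c)]
      norm_num
      exact Real.rpow_neg_one _
    rw [← h1, ← mul_assoc, inv_mul_cancel₀ (hwne c hc), one_mul]
  have hslice : ∀ c : ℝ, c ≠ 0 →
      Integrable (fun l : ℝ => w l * g (l * c)) ∧
      (∫ l : ℝ, w l * g (l * c)) = (starRingEnd ℂ) (w c) * ∫ y : ℝ, w y * g y := by
    intro c hc
    have hae : (fun l : ℝ => w l * g (l * c)) =ᵐ[volume]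
        fun l : ℝ => (w c)⁻¹ * ((fun y => w y * g y) (c * l)) := by
      filter_upwards [h0] with l hl
      simp only [mul_comm l c]
      rw [hmul c l hc hl]
      field_simp [hwne c hc]
    constructor
    · exact ((hGint.comp_mul_left' hc).const_mul _).congr hae.symm
    · calc (∫ l : ℝ, w l * g (l * c))
          = ∫ l : ℝ, (w c)⁻¹ * ((fun y => w y * g y) (c * l)) := integral_congr_ae hae
        _ = (w c)⁻¹ * ∫ l : ℝ, (fun y => w y * g y) (c * l) := integral_const_mul _ _
        _ = (w c)⁻¹ * (|c⁻¹| • ∫ y : ℝ, w y * g y) := by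
            rw [Measure.integral_comp_mul_left (fun y => w y * g y) c]
        _ = (starRingEnd ℂ) (w c) * ∫ y : ℝ, w y * g y := by
            rw [hconj c hc, Complex.real_smul, abs_inv]
            push_cast
            ring
  -- the kernel
  set K : ℝ × ℝ → ℂ := fun p => w p.1 * ((starRingEnd ℂ) (f p.2) * g (p.1 * p.2)) with hKdef
  have hKm : AEStronglyMeasurable K ((volume : Measure ℝ).prod volume) := by
    refine Measurable.aestronglyMeasurable ?_
    exact (hwm.comp measurable_fst).mul
      (((Complex.continuous_conj.measurable.comp (hfm.comp measurable_snd))).mul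
        (hgm.comp (measurable_fst.mul measurable_snd)))
  set Cg : ℝ := ∫ y : ℝ, |y| ^ (-(1/2 : ℝ)) * ‖g y‖ with hCg
  have hnormint : ∀ c : ℝ, c ≠ 0 →
      (∫ l : ℝ, ‖K (l, c)‖) = Cg * (|c| ^ (-(1/2 : ℝ)) * ‖f c‖) := by
    intro c hc
    have step1 : (∫ l : ℝ, ‖K (l, c)‖)
        = ‖f c‖ * ∫ l : ℝ, ‖w l‖ * ‖g (l * c)‖ := by
      rw [← integral_const_mul]
      refine integral_congr_ae (.of_forall fun l => ?_)
      simp only [hKdef, norm_mul, Complex.norm_conj]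
      ring
    have step2 : (∫ l : ℝ, ‖w l‖ * ‖g (l * c)‖)
        = |c| ^ ((1/2 : ℝ)) *
          ∫ l : ℝ, (fun y => |y| ^ (-(1/2 : ℝ)) * ‖g y‖) (c * l) := by
      rw [← integral_const_mul]
      refine integral_congr_ae ?_
      filter_upwards [h0] with l hl
      show ‖w l‖ * ‖g (l * c)‖
        = |c| ^ ((1/2 : ℝ)) * (|c * l| ^ (-(1/2 : ℝ)) * ‖g (c * l)‖)
      rw [habs l hl, mul_comm l c, abs_mul,
        Real.mul_rpow (abs_nonneg c) (abs_nonneg l), ← mul_assoc, ← mul_assoc,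
        ← Real.rpow_add (abs_pos.2 hc)]
      norm_num
    rw [step1, step2,
      Measure.integral_comp_mul_left (fun y => |y| ^ (-(1/2 : ℝ)) * ‖g y‖) c, smul_eq_mul, abs_inv,
      ← Real.rpow_neg_one |c|]
    have hr : |c| ^ ((1/2 : ℝ)) * |c| ^ (-1 : ℝ) = |c| ^ (-(1/2) : ℝ) := by
      rw [← Real.rpow_add (abs_pos.2 hc)]; norm_num
    linear_combination ‖f c‖ * Cg * hr
  have hKint : Integrable K ((volume : Measure ℝ).prod volume) := by
    refine (integrable_prod_iff' hKm).2 ⟨?_, ?_⟩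
    · filter_upwards [h0] with c hc
      have := ((hslice c hc).1.const_mul ((starRingEnd ℂ) (f c)))
      refine this.congr (.of_forall fun l => ?_)
      simp only [hKdef]
      ring
    · refine ((hf'.const_mul Cg).congr ?_)
      filter_upwards [h0] with c hc
      exact (hnormint c hc).symm
  constructor
  · have h1 := hKint.integral_prod_left
    refine h1.congr (.of_forall fun l => ?_)
    simp only [hKdef]
    exact integral_const_mul _ _
  · calc (∫ l : ℝ, w l * ∫ x : ℝ, (starRingEnd ℂ) (f x) * g (l * x))
        = ∫ l : ℝ, ∫ x : ℝ, K (l, x) := by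
          refine integral_congr_ae (.of_forall fun l => ?_)
          simp only [hKdef]
          exact (integral_const_mul _ _).symm
      _ = ∫ x : ℝ, ∫ l : ℝ, K (l, x) := integral_integral_swap hKint
      _ = ∫ x : ℝ, (starRingEnd ℂ) (w x * f x) * ∫ y : ℝ, w y * g y := by
          refine integral_congr_ae ?_
          filter_upwards [h0] with x hx
          calc (∫ l : ℝ, K (l, x))
              = ∫ l : ℝ, (starRingEnd ℂ) (f x) * (w l * g (l * x)) := by
                refine integral_congr_ae (.of_forall fun l => ?_)
                simp only [hKdef]
                ring
            _ = (starRingEnd ℂ) (f x) * ∫ l : ℝ, w l * g (l * x) := integral_const_mul _ _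
            _ = (starRingEnd ℂ) (f x) * ((starRingEnd ℂ) (w x) * ∫ y : ℝ, w y * g y) := by
                rw [(hslice x hx).2]
            _ = (starRingEnd ℂ) (w x * f x) * ∫ y : ℝ, w y * g y := by
                rw [map_mul]; ring
      _ = (∫ x : ℝ, (starRingEnd ℂ) (w x * f x)) * ∫ y : ℝ, w y * g y :=
          integral_mul_const _ _
      _ = (starRingEnd ℂ) (∫ x : ℝ, w x * f x) * ∫ x : ℝ, w x * g x := by
          rw [integral_conj]

theorem mellin_multiplicativity
    (f g : ℝ → ℂ) (hfm : Measurable f) (hgm : Measurable g)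
    (hf' : Integrable (fun x : ℝ => |x| ^ (-(1 / 2 : ℝ)) * ‖f x‖)
      (volume : Measure ℝ))
    (hg' : Integrable (fun x : ℝ => |x| ^ (-(1 / 2 : ℝ)) * ‖g x‖)
      (volume : Measure ℝ))
    (F₁ : ℝ → ℂ)
    (hF₁ : ∀ l : ℝ, F₁ l = ∫ x : ℝ, (starRingEnd ℂ) (f x) * g (l * x))
    (M₀ M₁ : (ℝ → ℂ) → ℝ → ℂ)
    (hM₀ : ∀ (h : ℝ → ℂ) (τ : ℝ), M₀ h τ =
      ∫ x in ({0}ᶜ : Set ℝ), ((|x| : ℝ) : ℂ) ^ ((-(1 / 2 : ℂ)) + τ * Complex.I) * h x)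
    (hM₁ : ∀ (h : ℝ → ℂ) (τ : ℝ), M₁ h τ =
      ∫ x in ({0}ᶜ : Set ℝ),
        ((|x| : ℝ) : ℂ) ^ ((-(1 / 2 : ℂ)) + τ * Complex.I) * ((x / |x| : ℝ) : ℂ) * h x) :
    ∀ τ : ℝ,
      IntegrableOn
        (fun l : ℝ => ((|l| : ℝ) : ℂ) ^ ((-(1 / 2 : ℂ)) + τ * Complex.I) * F₁ l)
        ({0}ᶜ : Set ℝ) (volume : Measure ℝ) ∧
      IntegrableOn
        (fun l : ℝ => ((|l| : ℝ) : ℂ) ^ ((-(1 / 2 : ℂ)) + τ * Complex.I)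
          * ((l / |l| : ℝ) : ℂ) * F₁ l)
        ({0}ᶜ : Set ℝ) (volume : Measure ℝ) ∧
      M₀ F₁ τ = (starRingEnd ℂ) (M₀ f τ) * M₀ g τ ∧
      M₁ F₁ τ = (starRingEnd ℂ) (M₁ f τ) * M₁ g τ := by
  intro τ
  have hres : (volume : Measure ℝ).restrict ({0}ᶜ : Set ℝ) = volume := by
    conv_rhs => rw [← Measure.restrict_univ (μ := (volume : Measure ℝ))]
    refine Measure.restrict_congr_set ?_
    rw [ae_eq_univ, compl_compl]
    exact measure_singleton 0
  set s : ℂ := (-(1 / 2 : ℂ)) + τ * Complex.I with hs_def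
  have hs : s ≠ 0 := by
    intro h
    have := congrArg Complex.re h
    simp [hs_def] at this
  have hsre : s.re = -(1 / 2 : ℝ) := by simp [hs_def]
  -- first weight
  set w₀ : ℝ → ℂ := fun x => ((|x| : ℝ) : ℂ) ^ s with hw₀def
  have habs_ne : ∀ x : ℝ, x ≠ 0 → ((|x| : ℝ) : ℂ) ≠ 0 := fun x hx => by
    simpa using abs_ne_zero.2 hx
  have hw₀m : Measurable w₀ := by
    have heq : w₀ = fun x : ℝ =>
        if x = 0 then 0 else Complex.exp (Complex.log ((|x| : ℝ) : ℂ) * s) := by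
      funext x
      by_cases hx : x = 0
      · simp [hw₀def, hx, Complex.zero_cpow hs]
      · rw [if_neg hx]
        exact Complex.cpow_def_of_ne_zero (habs_ne x hx) s
    rw [heq]
    refine Measurable.ite (MeasurableSet.singleton 0 : MeasurableSet {x : ℝ | x = 0})
      measurable_const ?_
    exact Complex.measurable_exp.comp
      ((Complex.measurable_log.comp
        (Complex.measurable_ofReal.comp _root_.continuous_abs.measurable)).mul_const s)
  have hw₀0 : w₀ 0 = 0 := by simp [hw₀def, Complex.zero_cpow hs]
  have hw₀abs : ∀ x : ℝ, x ≠ 0 → ‖w₀ x‖ = |x| ^ (-(1 / 2 : ℝ)) := by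
    intro x hx
    rw [hw₀def]
    simp only
    rw [Complex.norm_cpow_eq_rpow_re_of_pos (abs_pos.2 hx), hsre]
  have hw₀mul : ∀ l x : ℝ, l ≠ 0 → x ≠ 0 → w₀ (l * x) = w₀ l * w₀ x := by
    intro l x _ _
    simp only [hw₀def]
    rw [abs_mul, Complex.ofReal_mul, mul_cpow_ofReal_nonneg (abs_nonneg l) (abs_nonneg x)]
  -- second weight
  set w₁ : ℝ → ℂ := fun x => ((|x| : ℝ) : ℂ) ^ s * ((x / |x| : ℝ) : ℂ) with hw₁def
  have hw₁m : Measurable w₁ :=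
    hw₀m.mul (Complex.measurable_ofReal.comp (measurable_id.div _root_.continuous_abs.measurable))
  have hw₁0 : w₁ 0 = 0 := by simp [hw₁def]
  have hw₁abs : ∀ x : ℝ, x ≠ 0 → ‖w₁ x‖ = |x| ^ (-(1 / 2 : ℝ)) := by
    intro x hx
    simp only [hw₁def, norm_mul, Complex.norm_real, Real.norm_eq_abs]
    rw [show ‖((|x| : ℝ) : ℂ) ^ s‖ = |x| ^ (-(1 / 2 : ℝ)) from hw₀abs x hx]
    rw [abs_div, _root_.abs_abs, div_self (abs_ne_zero.2 hx), mul_one]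
  have hw₁mul : ∀ l x : ℝ, l ≠ 0 → x ≠ 0 → w₁ (l * x) = w₁ l * w₁ x := by
    intro l x hl hx
    simp only [hw₁def]
    rw [abs_mul, Complex.ofReal_mul, mul_cpow_ofReal_nonneg (abs_nonneg l) (abs_nonneg x),
      show l * x / (|l| * |x|) = (l / |l|) * (x / |x|) from (div_mul_div_comm l |l| x |x|).symm]
    push_cast
    ring
  obtain ⟨hi₀, he₀⟩ := mellin_aux f g hfm hgm hf' hg' w₀ hw₀m hw₀0 hw₀abs hw₀mul
  obtain ⟨hi₁, he₁⟩ := mellin_aux f g hfm hgm hf' hg' w₁ hw₁m hw₁0 hw₁abs hw₁mul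
  refine ⟨?_, ?_, ?_, ?_⟩
  · rw [IntegrableOn, hres]
    simp only [hF₁]
    exact hi₀
  · rw [IntegrableOn, hres]
    simp only [hF₁]
    exact hi₁.congr (Filter.Eventually.of_forall fun l => by simp [hw₁def, mul_assoc])
  · rw [hM₀ F₁ τ, hM₀ f τ, hM₀ g τ, hres]
    simp only [hF₁]
    exact he₀
  · rw [hM₁ F₁ τ, hM₁ f τ, hM₁ g τ, hres]
    simp only [hF₁]
    calc (∫ x : ℝ, ((|x| : ℝ) : ℂ) ^ s * ((x / |x| : ℝ) : ℂ)
            * ∫ y : ℝ, (starRingEnd ℂ) (f y) * g (x * y))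
        = ∫ l : ℝ, w₁ l * ∫ y : ℝ, (starRingEnd ℂ) (f y) * g (l * y) := by
          refine integral_congr_ae (.of_forall fun l => ?_)
          simp [hw₁def, mul_assoc]
      _ = (starRingEnd ℂ) (∫ x : ℝ, w₁ x * f x) * ∫ x : ℝ, w₁ x * g x := he₁
      _ = (starRingEnd ℂ) (∫ x : ℝ, ((|x| : ℝ) : ℂ) ^ s * ((x / |x| : ℝ) : ℂ) * f x)
            * ∫ x : ℝ, ((|x| : ℝ) : ℂ) ^ s * ((x / |x| : ℝ) : ℂ) * g x := by
          simp [hw₁def, mul_assoc]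
end

section
/- Let f ∈ L¹(ℝ) with Fourier transform f̂(y) = ∫_ℝ e^{−2πixy} f(x) dx, and suppose C := ∫_ℝ ∫_ℝ |f(x)|·|f̂(y)|·e^{2π|xy|} dx dy < ∞. Define F(λ) = ∫_ℝ ∫_ℝ conj(f(x))·f̂(y)·e^{2πiλxy} dx dy for complex λ in the closed strip {z ∈ ℂ : |Im z| ≤ 1}. Then this double integral converges absolutely for every λ in the closed strip, F is holomorphic on the open strip {z ∈ ℂ : |Im z| < 1}, F is continuous on the closed strip, and |F(λ)| ≤ C for all λ in the closed strip. -/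
open MeasureTheory Complex

set_option maxHeartbeats 1000000 in
theorem strip_function_properties
    (f : ℝ → ℂ) (hf : Integrable f (volume : Measure ℝ))
    (fhat : ℝ → ℂ)
    (hfhat : ∀ y : ℝ, fhat y =
      ∫ x : ℝ, Complex.exp (-2 * Real.pi * Complex.I * (x : ℂ) * (y : ℂ)) * f x)
    (C : ℝ)
    (hC : C = ∫ p : ℝ × ℝ,
      ‖f p.1‖ * ‖fhat p.2‖
        * Real.exp (2 * Real.pi * |p.1 * p.2|))
    (hint : Integrable
      (fun p : ℝ × ℝ =>
        ‖f p.1‖ * ‖fhat p.2‖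
          * Real.exp (2 * Real.pi * |p.1 * p.2|))
      (volume : Measure (ℝ × ℝ)))
    (F : ℂ → ℂ)
    (hF : ∀ l : ℂ, F l = ∫ p : ℝ × ℝ,
      (starRingEnd ℂ) (f p.1) * fhat p.2
        * Complex.exp (2 * Real.pi * Complex.I * l * (p.1 : ℂ) * (p.2 : ℂ))) :
    (∀ l : ℂ, |l.im| ≤ 1 →
      Integrable
        (fun p : ℝ × ℝ =>
          (starRingEnd ℂ) (f p.1) * fhat p.2
            * Complex.exp (2 * Real.pi * Complex.I * l * (p.1 : ℂ) * (p.2 : ℂ)))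
        (volume : Measure (ℝ × ℝ))) ∧
    DifferentiableOn ℂ F {z : ℂ | |z.im| < 1} ∧
    ContinuousOn F {z : ℂ | |z.im| ≤ 1} ∧
    (∀ l : ℂ, |l.im| ≤ 1 → ‖F l‖ ≤ C) := by
  -- continuity of fhat
  have hfhatc : Continuous fhat := by
    have : fhat = FourierTransform.fourier f := by
      funext y
      rw [hfhat, Real.fourier_real_eq_integral_exp_smul]
      congr 1; funext x
      rw [smul_eq_mul]
      congr 1
      push_cast
      ring
    rw [this]
    exact VectorFourier.fourierIntegral_continuous Real.continuous_fourierChar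
      (L := innerₗ ℝ) continuous_inner hf
  -- the norm of the exponential factor
  have keyexp : ∀ (l : ℂ) (x y : ℝ),
      ‖Complex.exp (2 * Real.pi * Complex.I * l * (x:ℂ) * (y:ℂ))‖
        = Real.exp (-(2 * Real.pi * l.im * (x * y))) := by
    intro l x y
    rw [Complex.norm_exp]
    congr 1
    simp [Complex.mul_re, Complex.mul_im]
    ring
  -- the norm of the whole integrand
  have key : ∀ (l : ℂ) (p : ℝ × ℝ),
      ‖(starRingEnd ℂ) (f p.1) * fhat p.2
          * Complex.exp (2 * Real.pi * Complex.I * l * (p.1:ℂ) * (p.2:ℂ))‖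
        = ‖f p.1‖ * ‖fhat p.2‖
            * Real.exp (-(2 * Real.pi * l.im * (p.1 * p.2))) := by
    intro l p
    rw [norm_mul, norm_mul, keyexp]
    simp
  -- uniform bound on strips
  have keyle : ∀ (r : ℝ) (l : ℂ), |l.im| ≤ r → ∀ p : ℝ × ℝ,
      Real.exp (-(2 * Real.pi * l.im * (p.1 * p.2)))
        ≤ Real.exp (2 * Real.pi * r * |p.1 * p.2|) := by
    intro r l hl p
    apply Real.exp_le_exp.2
    calc -(2 * Real.pi * l.im * (p.1 * p.2))
        ≤ |(-(2 * Real.pi * l.im * (p.1 * p.2)))| := le_abs_self _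
      _ = 2 * Real.pi * |l.im| * |p.1 * p.2| := by
          rw [abs_neg]
          simp [abs_mul, _root_.abs_two, _root_.abs_of_nonneg Real.pi_pos.le]
      _ ≤ 2 * Real.pi * r * |p.1 * p.2| := by
          apply mul_le_mul_of_nonneg_right _ (abs_nonneg _)
          have := Real.pi_pos
          nlinarith [abs_nonneg l.im]
  -- ae strong measurability of the integrand, for any l
  have hmeas : ∀ l : ℂ, AEStronglyMeasurable
      (fun p : ℝ × ℝ => (starRingEnd ℂ) (f p.1) * fhat p.2
        * Complex.exp (2 * Real.pi * Complex.I * l * (p.1:ℂ) * (p.2:ℂ)))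
      (volume : Measure (ℝ × ℝ)) := by
    intro l
    have h1 : AEStronglyMeasurable (fun p : ℝ × ℝ => (starRingEnd ℂ) (f p.1))
        (volume : Measure (ℝ × ℝ)) := by
      exact (Complex.continuous_conj.comp_aestronglyMeasurable
        (hf.aestronglyMeasurable.comp_quasiMeasurePreserving
          MeasureTheory.Measure.quasiMeasurePreserving_fst))
    have h2 : Continuous (fun p : ℝ × ℝ => fhat p.2
        * Complex.exp (2 * Real.pi * Complex.I * l * (p.1:ℂ) * (p.2:ℂ))) := by
      apply (hfhatc.comp continuous_snd).mul
      apply Complex.continuous_exp.comp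
      continuity
    have := h1.mul h2.aestronglyMeasurable
    simpa [mul_assoc, Pi.mul_def] using this
  -- part 1 : integrability
  have part1 : ∀ l : ℂ, |l.im| ≤ 1 →
      Integrable
        (fun p : ℝ × ℝ =>
          (starRingEnd ℂ) (f p.1) * fhat p.2
            * Complex.exp (2 * Real.pi * Complex.I * l * (p.1 : ℂ) * (p.2 : ℂ)))
        (volume : Measure (ℝ × ℝ)) := by
    intro l hl
    refine hint.mono (hmeas l) (Filter.Eventually.of_forall fun p => ?_)
    rw [key]
    have h1 := keyle 1 l hl p
    rw [Real.norm_eq_abs, _root_.abs_of_nonneg (by positivity)]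
    simp only [mul_one] at h1
    exact mul_le_mul_of_nonneg_left h1 (by positivity)
  refine ⟨part1, ?_, ?_, ?_⟩
  · -- differentiability on the open strip
    intro l₀ hl₀
    simp only [Set.mem_setOf_eq] at hl₀
    apply DifferentiableAt.differentiableWithinAt
    set r : ℝ := (1 + |l₀.im|) / 2 with hr
    set ε : ℝ := (1 - |l₀.im|) / 2 with hε
    have hε_pos : 0 < ε := by simp only [hε]; linarith
    have hr1 : r < 1 := by simp only [hr]; linarith
    have him : ∀ l ∈ Metric.ball l₀ ε, |l.im| ≤ r := by
      intro l hl
      have h1 : |l.im - l₀.im| ≤ ‖l - l₀‖ := by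
        simpa using Complex.abs_im_le_norm (l - l₀)
      have h2 : ‖l - l₀‖ < ε := by
        simpa [Complex.dist_eq] using hl
      have := abs_sub_abs_le_abs_sub l.im l₀.im
      simp only [hr]
      linarith [abs_sub_abs_le_abs_sub l.im l₀.im]
    -- derivative family
    set F' : ℂ → ℝ × ℝ → ℂ := fun l p =>
      (starRingEnd ℂ) (f p.1) * fhat p.2
        * (Complex.exp (2 * Real.pi * Complex.I * l * (p.1:ℂ) * (p.2:ℂ))
            * (2 * Real.pi * Complex.I * (p.1:ℂ) * (p.2:ℂ))) with hF'
    have hd := hasDerivAt_integral_of_dominated_loc_of_deriv_le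
      (F := fun l (p : ℝ × ℝ) => (starRingEnd ℂ) (f p.1) * fhat p.2
        * Complex.exp (2 * Real.pi * Complex.I * l * (p.1:ℂ) * (p.2:ℂ)))
      (F' := F') (x₀ := l₀)
      (bound := fun p : ℝ × ℝ => (1 - r)⁻¹ *
        (‖f p.1‖ * ‖fhat p.2‖
          * Real.exp (2 * Real.pi * |p.1 * p.2|)))
      (Metric.ball_mem_nhds l₀ hε_pos)
      (Filter.Eventually.of_forall fun l => hmeas l)
      (part1 l₀ (by linarith [abs_nonneg l₀.im] : |l₀.im| ≤ 1))
      ?_ ?_ (hint.const_mul _) ?_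
    · have hFeq : F = fun l : ℂ => ∫ p : ℝ × ℝ,
          (starRingEnd ℂ) (f p.1) * fhat p.2
            * Complex.exp (2 * Real.pi * Complex.I * l * (p.1:ℂ) * (p.2:ℂ)) :=
        funext hF
      rw [hFeq]
      exact hd.2.differentiableAt
    · -- measurability of F' l₀
      have : F' l₀ = fun p : ℝ × ℝ =>
          ((starRingEnd ℂ) (f p.1) * fhat p.2
            * Complex.exp (2 * Real.pi * Complex.I * l₀ * (p.1:ℂ) * (p.2:ℂ)))
          * (2 * Real.pi * Complex.I * (p.1:ℂ) * (p.2:ℂ)) := by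
        funext p
        simp only [hF']
        ring
      rw [this]
      apply (hmeas l₀).mul
      apply Continuous.aestronglyMeasurable
      continuity
    · -- bound for the derivative on the ball
      refine Filter.Eventually.of_forall fun p => fun l hl => ?_
      have hnorm2 : ‖(2:ℂ) * (Real.pi:ℂ) * Complex.I * (p.1:ℂ) * (p.2:ℂ)‖
          = 2 * Real.pi * |p.1 * p.2| := by
        simp only [norm_mul, Complex.norm_I, Complex.norm_real, Real.norm_eq_abs,
          Complex.norm_two, mul_one]
        rw [abs_mul, _root_.abs_of_nonneg Real.pi_pos.le]
        ring
      have hnorm : ‖F' l p‖ = ‖f p.1‖ * ‖fhat p.2‖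
          * (Real.exp (-(2 * Real.pi * l.im * (p.1 * p.2)))
              * (2 * Real.pi * |p.1 * p.2|)) := by
        simp only [hF', norm_mul, keyexp l p.1 p.2, hnorm2,
          Complex.norm_conj]
      rw [hnorm]
      have h1r : 0 < 1 - r := by linarith
      have e1 := keyle r l (him l hl) p
      have hu : 2 * Real.pi * (1 - r) * |p.1 * p.2|
          ≤ Real.exp (2 * Real.pi * (1 - r) * |p.1 * p.2|) := by
        have := Real.add_one_le_exp (2 * Real.pi * (1 - r) * |p.1 * p.2|)
        linarith
      have h2 : 2 * Real.pi * |p.1 * p.2|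
          ≤ (1 - r)⁻¹ * Real.exp (2 * Real.pi * (1 - r) * |p.1 * p.2|) := by
        calc 2 * Real.pi * |p.1 * p.2|
            = (1 - r)⁻¹ * (2 * Real.pi * (1 - r) * |p.1 * p.2|) := by
              field_simp
          _ ≤ (1 - r)⁻¹ * Real.exp (2 * Real.pi * (1 - r) * |p.1 * p.2|) :=
              mul_le_mul_of_nonneg_left hu (by positivity)
      have total : Real.exp (-(2 * Real.pi * l.im * (p.1 * p.2)))
            * (2 * Real.pi * |p.1 * p.2|)
          ≤ Real.exp (2 * Real.pi * r * |p.1 * p.2|)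
            * ((1 - r)⁻¹ * Real.exp (2 * Real.pi * (1 - r) * |p.1 * p.2|)) := by
        apply mul_le_mul e1 h2 (by positivity) (by positivity)
      calc ‖f p.1‖ * ‖fhat p.2‖
            * (Real.exp (-(2 * Real.pi * l.im * (p.1 * p.2)))
                * (2 * Real.pi * |p.1 * p.2|))
          ≤ ‖f p.1‖ * ‖fhat p.2‖
            * (Real.exp (2 * Real.pi * r * |p.1 * p.2|)
              * ((1 - r)⁻¹ * Real.exp (2 * Real.pi * (1 - r) * |p.1 * p.2|))) :=
            mul_le_mul_of_nonneg_left total (by positivity)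
        _ = (1 - r)⁻¹ * (‖f p.1‖ * ‖fhat p.2‖
              * Real.exp (2 * Real.pi * |p.1 * p.2|)) := by
            rw [show (2 * Real.pi * |p.1 * p.2|)
                = 2 * Real.pi * r * |p.1 * p.2|
                  + 2 * Real.pi * (1 - r) * |p.1 * p.2| by ring, Real.exp_add]
            ring
    · -- differentiability of the integrand in l
      refine Filter.Eventually.of_forall fun p => fun l hl => ?_
      have e1 : (fun l : ℂ => (starRingEnd ℂ) (f p.1) * fhat p.2
            * Complex.exp (2 * Real.pi * Complex.I * l * (p.1:ℂ) * (p.2:ℂ)))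
          = fun l : ℂ => (starRingEnd ℂ) (f p.1) * fhat p.2
            * Complex.exp ((2 * Real.pi * Complex.I * (p.1:ℂ) * (p.2:ℂ)) * l) := by
        funext l
        congr 2
        ring
      rw [e1]
      have h := (((hasDerivAt_id l).const_mul
          ((2:ℂ) * Real.pi * Complex.I * (p.1:ℂ) * (p.2:ℂ))).cexp).const_mul
          ((starRingEnd ℂ) (f p.1) * fhat p.2)
      convert h using 1
      · rfl
      · rfl
      simp only [hF', mul_one, id_eq]
      rw [show (2 * (Real.pi:ℂ) * Complex.I * (p.1:ℂ) * (p.2:ℂ)) * l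
          = 2 * Real.pi * Complex.I * l * (p.1:ℂ) * (p.2:ℂ) by ring]
  · -- continuity on the closed strip
    intro l₀ hl₀
    have hFeq : F = fun l => ∫ p : ℝ × ℝ,
        (starRingEnd ℂ) (f p.1) * fhat p.2
          * Complex.exp (2 * Real.pi * Complex.I * l * (p.1:ℂ) * (p.2:ℂ)) :=
      funext hF
    rw [hFeq]
    apply continuousWithinAt_of_dominated
      (bound := fun p : ℝ × ℝ => ‖f p.1‖ * ‖fhat p.2‖
        * Real.exp (2 * Real.pi * |p.1 * p.2|))
    · exact Filter.Eventually.of_forall fun l => hmeas l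
    · apply eventually_nhdsWithin_of_forall
      intro l hl
      refine Filter.Eventually.of_forall fun p => ?_
      rw [key]
      have h1 := keyle 1 l hl p
      simp only [mul_one] at h1
      exact mul_le_mul_of_nonneg_left h1 (by positivity)
    · exact hint
    · refine Filter.Eventually.of_forall fun p => ?_
      apply Continuous.continuousWithinAt
      apply continuous_const.mul
      apply Complex.continuous_exp.comp
      continuity
  · -- the bound
    intro l hl
    rw [hF l, hC]
    refine (norm_integral_le_integral_norm _).trans ?_
    apply integral_mono (part1 l hl).norm hint
    intro p
    dsimp only
    rw [key]
    have h1 := keyle 1 l hl p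
    simp only [mul_one] at h1
    exact mul_le_mul_of_nonneg_left h1 (by positivity)
end

section
/- Let f : ℝ → ℂ be a measurable function such that x ↦ |x|^{−1/2}|f(x)| is integrable on ℝ, and define M₁[f](τ) = ∫_{ℝ∖{0}} |x|^{−1/2+iτ}·sgn(x)·f(x) dx for τ ∈ ℝ. Then M₁[f](τ) = 0 for all τ ∈ ℝ if and only if f is even, i.e., f(−x) = f(x) for almost every x ∈ ℝ. -/
open MeasureTheory Complex Real Set FourierTransform SchwartzMap
open scoped ContDiff RealInnerProductSpace

noncomputable def csSchwartz (g : ℝ → ℂ) (hg : ContDiff ℝ ∞ g) (h2 : HasCompactSupport g) :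
    SchwartzMap ℝ ℂ where
  toFun := g
  smooth' := hg
  decay' := by
    intro k n
    have hcont : Continuous (iteratedFDeriv ℝ n g) :=
      hg.continuous_iteratedFDeriv (by exact_mod_cast le_top)
    have h3 : HasCompactSupport (fun x : ℝ => ‖x‖ ^ k * ‖iteratedFDeriv ℝ n g x‖) := by
      apply HasCompactSupport.mul_left
      exact (h2.iteratedFDeriv n).norm
    obtain ⟨C, hC⟩ := (Continuous.mul (by fun_prop) hcont.norm).bounded_above_of_compact_support h3
    exact ⟨C, fun x => le_trans (le_abs_self _) (hC x)⟩

theorem fourier_zero_ae (h : ℝ → ℂ) (hi : Integrable h) (hz : ∀ ξ : ℝ, 𝓕 h ξ = 0) :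
    ∀ᵐ x : ℝ, h x = 0 := by
  apply ae_eq_zero_of_integral_contDiff_smul_eq_zero hi.locallyIntegrable
  intro g gsmooth gsupp
  set G : SchwartzMap ℝ ℂ := csSchwartz (fun x => (g x : ℂ))
    (Complex.ofRealCLM.contDiff.comp gsmooth) (gsupp.comp_left (g := ((↑) : ℝ → ℂ)) rfl)
  set φ : SchwartzMap ℝ ℂ := (fourierTransformCLE ℂ (E := SchwartzMap ℝ ℂ)).symm G
  have hφ : 𝓕 (⇑φ) = ⇑G := by
    have := (fourierTransformCLE ℂ (E := SchwartzMap ℝ ℂ)).apply_symm_apply G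
    rw [← this]
    rfl
  have mult := VectorFourier.integral_fourierIntegral_smul_eq_flip (L := innerₗ ℝ)
    (μ := volume) (ν := volume) Real.continuous_fourierChar continuous_inner φ.integrable hi
  have flipeq : (innerₗ ℝ).flip = innerₗ ℝ :=
    LinearMap.ext fun x => LinearMap.ext fun y => real_inner_comm x y
  rw [flipeq] at mult
  calc ∫ x : ℝ, g x • h x = ∫ ξ : ℝ, (𝓕 (⇑φ) ξ) • h ξ := by
        rw [hφ]
        congr 1 with x
      _ = ∫ x : ℝ, φ x • (VectorFourier.fourierIntegral 𝐞 volume (innerₗ ℝ) h x) := mult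
      _ = 0 := by
        simp only [show ∀ x, VectorFourier.fourierIntegral 𝐞 volume (innerₗ ℝ) h x = 0 from hz,
          smul_zero, integral_zero]

section COV

variable {F : Type*} [NormedAddCommGroup F] [NormedSpace ℝ F]

lemma exp_cov_integral (G : ℝ → F) :
    ∫ x in Set.Ioi (0:ℝ), G x = ∫ t : ℝ, rexp t • G (rexp t) := by
  rw [← Real.range_exp, ← Set.image_univ,
    integral_image_eq_integral_abs_deriv_smul MeasurableSet.univ
      (fun x _ => (Real.hasDerivAt_exp x).hasDerivWithinAt) Real.exp_injective.injOn G]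
  simp only [abs_of_pos (Real.exp_pos _), Measure.restrict_univ]

lemma exp_cov_integrableOn (G : ℝ → F) :
    IntegrableOn G (Set.Ioi (0:ℝ)) ↔ Integrable (fun t : ℝ => rexp t • G (rexp t)) := by
  rw [← Real.range_exp, ← Set.image_univ,
    integrableOn_image_iff_integrableOn_abs_deriv_smul MeasurableSet.univ
      (fun x _ => (Real.hasDerivAt_exp x).hasDerivWithinAt) Real.exp_injective.injOn G]
  simp only [abs_of_pos (Real.exp_pos _)]
  rw [integrableOn_univ]

lemma integrable_comp_neg' {w : ℝ → F} (hw : Integrable w (volume : Measure ℝ)) :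
    Integrable (fun x : ℝ => w (-x)) (volume : Measure ℝ) :=
  ((Measure.measurePreserving_neg (volume : Measure ℝ)).integrable_comp_emb
    (Homeomorph.neg ℝ).measurableEmbedding).2 hw

end COV

theorem mellin_M1_vanishes_iff_even
    (f : ℝ → ℂ) (hfm : Measurable f)
    (hf' : Integrable (fun x : ℝ => |x| ^ (-(1 / 2 : ℝ)) * ‖f x‖)
      (volume : Measure ℝ))
    (M₁ : ℝ → ℂ)
    (hM₁ : ∀ τ : ℝ, M₁ τ =
      ∫ x in ({0}ᶜ : Set ℝ),
        ((|x| : ℝ) : ℂ) ^ ((-(1 / 2 : ℂ)) + τ * Complex.I) * ((x / |x| : ℝ) : ℂ) * f x) :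
    (∀ τ : ℝ, M₁ τ = 0) ↔ (∀ᵐ x : ℝ ∂(volume : Measure ℝ), f (-x) = f x) := by
  set s : ℝ → ℂ := fun τ => (-(1 / 2 : ℂ)) + τ * Complex.I with hs
  set Φ : ℝ → ℝ → ℂ :=
    fun τ x => ((|x| : ℝ) : ℂ) ^ (s τ) * ((x / |x| : ℝ) : ℂ) * f x with hΦ
  have hsre : ∀ τ : ℝ, (s τ).re = -(1/2 : ℝ) := by intro τ; simp [hs]
  have hsne : ∀ τ : ℝ, s τ ≠ 0 := by
    intro τ h
    have := congrArg Complex.re h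
    rw [hsre] at this
    norm_num at this
  have habs : ∀ (τ : ℝ) (x : ℝ),
      ‖((|x| : ℝ) : ℂ) ^ (s τ)‖ = |x| ^ (-(1/2 : ℝ)) := by
    intro τ x
    rcases eq_or_ne x 0 with h | h
    · rw [h]
      simp only [abs_zero, Complex.ofReal_zero]
      rw [Complex.zero_cpow (hsne τ), Real.zero_rpow (by norm_num), norm_zero]
    · rw [Complex.norm_cpow_eq_rpow_re_of_pos (abs_pos.2 h), hsre]
  have hsgn : ∀ x : ℝ, |(x / |x| : ℝ)| ≤ 1 := by
    intro x
    rcases eq_or_ne x 0 with h | h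
    · simp [h]
    · rw [abs_div, _root_.abs_abs, div_self (abs_ne_zero.2 h)]
  have hbound : ∀ (τ : ℝ) (x : ℝ),
      ‖Φ τ x‖ ≤ |x| ^ (-(1 / 2 : ℝ)) * ‖f x‖ := by
    intro τ x
    have hnn : ‖Φ τ x‖ = ‖((|x| : ℝ) : ℂ) ^ (s τ)‖ * |(x / |x| : ℝ)| * ‖f x‖ := by
      rw [hΦ]
      simp only [norm_mul, Complex.norm_real, Real.norm_eq_abs]
    rw [hnn, habs]
    have h2 : |x| ^ (-(1/2:ℝ)) * |(x / |x| : ℝ)| ≤ |x| ^ (-(1/2:ℝ)) :=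
      mul_le_of_le_one_right (by positivity) (hsgn x)
    have h3 := mul_le_mul_of_nonneg_right h2 (norm_nonneg (f x))
    simpa using h3
  have hΦmeas : ∀ τ : ℝ, AEStronglyMeasurable (Φ τ) volume := by
    intro τ
    apply Measurable.aestronglyMeasurable
    exact (((Complex.measurable_ofReal.comp measurable_abs).pow measurable_const).mul
      (Complex.measurable_ofReal.comp (measurable_id.div measurable_abs))).mul hfm
  have hΦint : ∀ τ : ℝ, Integrable (Φ τ) := fun τ =>
    hf'.mono' (hΦmeas τ) (Filter.Eventually.of_forall (hbound τ))
  -- Step: rewrite M₁ as integral over Ioi 0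
  have M₁eq : ∀ τ : ℝ, M₁ τ =
      ∫ x in Ioi (0:ℝ), ((x : ℝ) : ℂ) ^ (s τ) * (f x - f (-x)) := by
    intro τ
    have hd : Disjoint (Iio (0:ℝ)) (Ioi 0) :=
      Set.disjoint_left.2 fun x (hx : x < 0) (hx' : 0 < x) => absurd (hx.trans hx') (lt_irrefl x)
    rw [hM₁ τ, ← Set.Iio_union_Ioi,
      setIntegral_union hd measurableSet_Ioi (hΦint τ).integrableOn (hΦint τ).integrableOn]
    have h1 : ∫ x in Iio (0:ℝ), Φ τ x = ∫ x in Ioi (0:ℝ), Φ τ (-x) := by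
      rw [integral_comp_neg_Ioi 0 (Φ τ), neg_zero, setIntegral_congr_set Iio_ae_eq_Iic]
    have hnegint : IntegrableOn (fun x => Φ τ (-x)) (Ioi (0:ℝ)) :=
      (integrable_comp_neg' (hΦint τ)).integrableOn
    rw [h1, ← integral_add hnegint (hΦint τ).integrableOn]
    apply setIntegral_congr_fun measurableSet_Ioi
    intro x hx
    have hx' : (0:ℝ) < x := hx
    have hax : |x| = x := abs_of_pos hx'
    have hanx : |(-x)| = x := by rw [abs_neg, hax]
    simp only [hΦ, hanx, hax, neg_div, div_self hx'.ne']
    push_cast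
    ring
  -- cpow on exponentials
  have hcpow : ∀ (t : ℝ) (w : ℂ), ((rexp t : ℝ) : ℂ) ^ w = Complex.exp (t * w) := by
    intro t w
    rw [Complex.ofReal_exp, Complex.cpow_def_of_ne_zero (Complex.exp_ne_zero _),
      Complex.log_exp (by simpa using Real.pi_pos) (by simpa using Real.pi_nonneg)]
  have hcpow' : ∀ (t : ℝ) (w : ℂ), (Complex.exp (t : ℂ)) ^ w = Complex.exp (t * w) := by
    intro t w
    rw [Complex.cpow_def_of_ne_zero (Complex.exp_ne_zero _),
      Complex.log_exp (by simpa using Real.pi_pos) (by simpa using Real.pi_nonneg)]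
  set g : ℝ → ℂ := fun x => f x - f (-x) with hg
  set G₀ : ℝ → ℂ := fun x => ((x : ℝ) : ℂ) ^ (-(1/2 : ℂ)) * g x with hG₀
  set H : ℝ → ℂ := fun t => rexp t • G₀ (rexp t) with hH
  have habs2 : ∀ x : ℝ, ‖((x : ℝ) : ℂ) ^ (-(1/2 : ℂ))‖ = |x| ^ (-(1/2 : ℝ)) := by
    intro x
    rcases eq_or_ne x 0 with h | h
    · rw [h]
      simp only [Complex.ofReal_zero, abs_zero]
      rw [Complex.zero_cpow (by norm_num : (-(1/2 : ℂ)) ≠ 0), Real.zero_rpow (by norm_num),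
        norm_zero]
    · rw [Complex.norm_cpow_of_ne_zero (Complex.ofReal_ne_zero.2 h)]
      simp [Complex.norm_real]
  have hgmeas : Measurable g := hfm.sub (hfm.comp measurable_neg)
  have hG₀meas : Measurable G₀ :=
    ((Complex.measurable_ofReal.pow measurable_const)).mul hgmeas
  have hfneg : Integrable (fun x : ℝ => |x| ^ (-(1 / 2 : ℝ)) * ‖f (-x)‖)
      (volume : Measure ℝ) := by
    have := integrable_comp_neg' hf'
    simpa [abs_neg] using this
  have hG₀bound : ∀ x : ℝ, ‖G₀ x‖ ≤
      |x| ^ (-(1 / 2 : ℝ)) * ‖f x‖ + |x| ^ (-(1 / 2 : ℝ)) * ‖f (-x)‖ := by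
    intro x
    have : ‖G₀ x‖ = |x| ^ (-(1/2:ℝ)) * ‖g x‖ := by
      rw [hG₀]
      simp only [norm_mul, habs2]
    rw [this, ← mul_add]
    have h2 : ‖g x‖ ≤ ‖f x‖ + ‖f (-x)‖ := norm_sub_le _ _
    exact mul_le_mul_of_nonneg_left h2 (by positivity)
  have hG₀int : Integrable G₀ :=
    (hf'.add hfneg).mono' hG₀meas.aestronglyMeasurable (Filter.Eventually.of_forall hG₀bound)
  have hHint : Integrable H := (exp_cov_integrableOn G₀).1 hG₀int.integrableOn
  -- key identity
  have key : ∀ τ : ℝ, M₁ τ = 𝓕 H (-τ / (2 * π)) := by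
    intro τ
    rw [M₁eq τ]
    rw [show (fun x : ℝ => ((x : ℝ) : ℂ) ^ (s τ) * (f x - f (-x))) =
      (fun x : ℝ => ((x : ℝ) : ℂ) ^ (s τ) * g x) from rfl] at *
    rw [exp_cov_integral (fun x : ℝ => ((x : ℝ) : ℂ) ^ (s τ) * g x),
      Real.fourier_eq']
    congr 1 with t
    have hin : (inner ℝ t (-τ / (2 * π)) : ℝ) = t * (-τ / (2 * π)) := by
      rw [RCLike.inner_apply, conj_trivial, mul_comm]
    have harg : -2 * π * (t * (-τ / (2 * π))) = t * τ := by
      field_simp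
    rw [hin, harg, hH, hG₀]
    simp only [hs, hcpow, hcpow', Complex.real_smul, Complex.ofReal_exp, smul_eq_mul,
      ← mul_assoc, ← Complex.exp_add]
    congr 1
    push_cast
    ring
  constructor
  · intro hv
    have hF0 : ∀ ξ : ℝ, 𝓕 H ξ = 0 := by
      intro ξ
      have h := hv (-(2 * π * ξ))
      rw [key] at h
      have : -(-(2 * π * ξ)) / (2 * π) = ξ := by
        field_simp
      rwa [this] at h
    have hH0 : ∀ᵐ t : ℝ, H t = 0 := fourier_zero_ae H hHint hF0
    have h1 : ∫ t : ℝ, ‖H t‖ = 0 := by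
      rw [integral_congr_ae (hH0.mono fun t ht => by rw [ht, norm_zero]), integral_zero]
    have h2 : ∫ x in Ioi (0:ℝ), ‖G₀ x‖ = 0 := by
      rw [exp_cov_integral (fun x : ℝ => ‖G₀ x‖), ← h1]
      congr 1 with t
      rw [hH]
      simp [norm_smul, abs_of_pos (Real.exp_pos t), smul_eq_mul]
    have h3 : ∀ᵐ x ∂(volume.restrict (Ioi (0:ℝ))), ‖G₀ x‖ = 0 := by
      have := (integral_eq_zero_iff_of_nonneg_ae
        (Filter.Eventually.of_forall fun x => norm_nonneg (G₀ x))
        hG₀int.integrableOn.norm).1 h2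
      filter_upwards [this] with x hx using hx
    have h4 : ∀ᵐ x : ℝ, x ∈ Ioi (0:ℝ) → g x = 0 := by
      rw [← ae_restrict_iff' measurableSet_Ioi]
      filter_upwards [h3, ae_restrict_mem measurableSet_Ioi] with x hx hmem
      have hG0 : G₀ x = 0 := norm_eq_zero.1 hx
      rw [hG₀] at hG0
      rcases mul_eq_zero.1 hG0 with h | h
      · exfalso
        rcases (Complex.cpow_eq_zero_iff _ _).1 h with ⟨h0, _⟩
        exact absurd (by exact_mod_cast h0 : x = 0) (ne_of_gt (show (0:ℝ) < x from hmem))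
      · exact h
    have h6 : ∀ᵐ x : ℝ, -x ∈ Ioi (0:ℝ) → g (-x) = 0 := by
      have mp : MeasurePreserving (fun x : ℝ => -x) volume volume :=
        Measure.measurePreserving_neg _
      have hS : MeasurableSet {x : ℝ | x ∈ Ioi (0:ℝ) → g x = 0} := by
        have : {x : ℝ | x ∈ Ioi (0:ℝ) → g x = 0} =
            (Ioi (0:ℝ))ᶜ ∪ (g ⁻¹' {0}) := by
          ext x
          simp [imp_iff_not_or]
        rw [this]
        exact (measurableSet_Ioi.compl).union (hgmeas (measurableSet_singleton 0))
      have h5' : ∀ᵐ x ∂(Measure.map (fun x : ℝ => -x) volume),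
          x ∈ Ioi (0:ℝ) → g x = 0 := by rwa [mp.map_eq]
      exact (MeasureTheory.ae_map_iff measurable_neg.aemeasurable hS).1 h5'
    filter_upwards [h4, h6] with x hx hnx
    rcases lt_trichotomy x 0 with h | h | h
    · have hgn : g (-x) = 0 := hnx (by simpa using h)
      rw [hg] at hgn
      simp only [neg_neg] at hgn
      exact sub_eq_zero.1 hgn
    · rw [h, neg_zero]
    · have hgx : g x = 0 := hx h
      rw [hg] at hgx
      exact (sub_eq_zero.1 hgx).symm
  · intro hev τ
    rw [M₁eq τ]
    have : ∀ᵐ x ∂(volume.restrict (Ioi (0:ℝ))),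
        ((x : ℝ) : ℂ) ^ (s τ) * (f x - f (-x)) = 0 := by
      apply ae_restrict_of_ae
      filter_upwards [hev] with x hx
      rw [hx, sub_self, mul_zero]
    rw [integral_congr_ae this, integral_zero]
end
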